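/- arXiv:2504.21377 — 3 statements merged into one kernel-verified Lean document; each statement's English description precedes it below -/
import Mathlib

section
/- Let A, β, γ be positive real numbers, let M = (1/A)·[[−β, β], [β, −β − γ]], and let x : ℝ → ℝ² be differentiable with ẋ(t) = M·x(t) for all t ≥ 0. Then x(t) tends to 0 as t → ∞; in fact there exists c > 0 (depending only on A, β, γ) such that ‖x(t)‖ ≤ ‖x(0)‖·exp(−c·t) for all t ≥ 0. -/
open Matrix Real Filter

/-!
`‖x‖²` is a strict Lyapunov function: `⟪v, M v⟫ = -(β (v₀ - v₁)² + γ v₁²) / A ≤ -c ‖v‖²`,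
so `d/dt ‖x‖² ≤ -2c ‖x‖²` along solutions, and Grönwall's inequality gives exponential decay.
-/

theorem norm_le_mul_exp_of_inner_deriv_le {E : Type*} [NormedAddCommGroup E]
    [InnerProductSpace ℝ E] {f f' : ℝ → E} {a c : ℝ} (hf : ∀ t ≥ a, HasDerivAt f (f' t) t)
    (hdiss : ∀ t ≥ a, inner ℝ (f t) (f' t) ≤ -c * ‖f t‖ ^ 2) {t : ℝ} (ht : a ≤ t) :
    ‖f t‖ ≤ ‖f a‖ * exp (-c * (t - a)) := by
  have hsq : ∀ s ≥ a, HasDerivAt (fun s => ‖f s‖ ^ 2) (2 * inner ℝ (f s) (f' s)) s :=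
    fun s hs => (hf s hs).norm_sq
  have hgron := le_gronwallBound_of_liminf_deriv_right_le (δ := ‖f a‖ ^ 2) (K := -2 * c)
    (ε := 0) (fun s hs => (hsq s hs.1).continuousAt.continuousWithinAt)
    (fun s hs _ hr => (hsq s hs.1).hasDerivWithinAt.liminf_right_slope_le hr) le_rfl
    (fun s hs => by linarith [hdiss s hs.1]) t ⟨ht, le_rfl⟩
  refine le_of_pow_le_pow_left₀ two_ne_zero (by positivity) ?_
  calc ‖f t‖ ^ 2 ≤ ‖f a‖ ^ 2 * exp (-2 * c * (t - a)) := by rwa [gronwallBound_ε0] at hgron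
    _ = (‖f a‖ * exp (-c * (t - a))) ^ 2 := by rw [mul_pow, ← exp_nat_mul]; ring_nf

theorem tendsto_zero_of_norm_le_mul_exp {E : Type*} [SeminormedAddCommGroup E] {f : ℝ → E}
    {C c : ℝ} (hc : 0 < c) (hf : ∀ᶠ t in atTop, ‖f t‖ ≤ C * exp (-c * t)) :
    Tendsto f atTop (nhds 0) := by
  have hexp : Tendsto (fun t => C * exp (-c * t)) atTop (nhds 0) := by
    simpa using (tendsto_exp_atBot.comp
      (tendsto_id.const_mul_atTop_of_neg (neg_neg_of_pos hc))).const_mul C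
  exact squeeze_zero_norm' hf hexp

noncomputable def twoTankMatrix (A β γ : ℝ) : Matrix (Fin 2) (Fin 2) ℝ :=
  (1 / A) • !![-β, β; β, -β - γ]

theorem inner_twoTankMatrix_mulVec (A β γ : ℝ) (v : EuclideanSpace ℝ (Fin 2)) :
    inner ℝ v (WithLp.toLp 2 (twoTankMatrix A β γ *ᵥ v)) =
      -(β * (v 0 - v 1) ^ 2 + γ * v 1 ^ 2) / A := by
  simp [twoTankMatrix, PiLp.inner_apply, Fin.sum_univ_two, dotProduct]
  ring

-- From `a² ≤ 2 (a - b)² + 2 b²`, i.e. `a² + b² ≤ 2 (a - b)² + 3 b²`.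
theorem min_div_mul_sq_add_sq_le {β γ : ℝ} (hβ : 0 ≤ β) (hγ : 0 ≤ γ) (a b : ℝ) :
    min (β / 2) (γ / 3) * (a ^ 2 + b ^ 2) ≤ β * (a - b) ^ 2 + γ * b ^ 2 := by
  have hle_left := min_le_left (β / 2) (γ / 3)
  have hle_right := min_le_right (β / 2) (γ / 3)
  have hmin_nonneg : 0 ≤ min (β / 2) (γ / 3) := le_min (by positivity) (by positivity)
  nlinarith [mul_le_mul_of_nonneg_right hle_left (sq_nonneg (a - b)),
    mul_le_mul_of_nonneg_right hle_right (sq_nonneg b),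
    mul_nonneg hmin_nonneg (sq_nonneg (a - 2 * b))]

theorem inner_twoTankMatrix_mulVec_le {A β γ : ℝ} (hA : 0 < A) (hβ : 0 ≤ β) (hγ : 0 ≤ γ)
    (v : EuclideanSpace ℝ (Fin 2)) :
    inner ℝ v (WithLp.toLp 2 (twoTankMatrix A β γ *ᵥ v)) ≤
      -(min (β / 2) (γ / 3) / A) * ‖v‖ ^ 2 := by
  rw [inner_twoTankMatrix_mulVec, EuclideanSpace.real_norm_sq_eq, Fin.sum_univ_two, neg_mul,
    div_mul_eq_mul_div, neg_div, neg_le_neg_iff]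
  gcongr
  exact min_div_mul_sq_add_sq_le hβ hγ _ _

/-- Solutions of the linearized two-tank system `ẋ = M x` with
`M = (1/A)·[[−β, β], [β, −β−γ]]`, `A, β, γ > 0`, converge to `0`; in fact they
decay exponentially: `‖x(t)‖ ≤ ‖x(0)‖·exp(−c t)` for some `c > 0`. -/
theorem two_tank_linear_asymptotic_stability
    (A β γ : ℝ) (hA : 0 < A) (hβ : 0 < β) (hγ : 0 < γ)
    (M : Matrix (Fin 2) (Fin 2) ℝ)
    (hM : M = (1 / A) • !![-β, β; β, -β - γ])
    (x : ℝ → EuclideanSpace ℝ (Fin 2))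
    (hx : ∀ t : ℝ, 0 ≤ t → HasDerivAt x (WithLp.toLp 2 (M.mulVec (x t))) t) :
    Tendsto x atTop (nhds 0) ∧
    ∃ c : ℝ, 0 < c ∧ ∀ t : ℝ, 0 ≤ t → ‖x t‖ ≤ ‖x 0‖ * Real.exp (-c * t) := by
  obtain rfl : M = twoTankMatrix A β γ := hM
  set c := min (β / 2) (γ / 3) / A
  have hc : 0 < c := by positivity
  have hdecay : ∀ t : ℝ, 0 ≤ t → ‖x t‖ ≤ ‖x 0‖ * exp (-c * t) := fun t ht => by
    simpa using norm_le_mul_exp_of_inner_deriv_le hx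
      (fun t _ => inner_twoTankMatrix_mulVec_le hA hβ.le hγ.le (x t)) ht
  exact ⟨tendsto_zero_of_norm_le_mul_exp hc ((eventually_ge_atTop 0).mono hdecay), c, hc, hdecay⟩
end

section
/- For p ∈ ℝ[X] and a smooth function f : ℝ → ℝ, define the action p • f := (t ↦ ∑_{i=0}^{deg p} (coeff_i p) · (d^i f/dt^i)(t)) via iterated derivatives, extended to matrices over ℝ[X] acting on vectors of smooth functions by (H·z)_i = ∑_j H_{ij} • z_j. Let H be an n×q matrix, W an n×n matrix, V a q×q matrix over ℝ[X], with W invertible over ℝ[X] and D = W·H·V. If h : Fin q → (ℝ → ℝ) is a vector of smooth (C^∞) functions satisfying D·h = 0 (each component identically zero), then the vector z := V·h consists of smooth functions and satisfies H·z = 0 identically. -/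
open Polynomial

/-- The action of a polynomial `p ∈ ℝ[X]` (in the differentiation operator)
on a function `f : ℝ → ℝ`: `p • f = ∑ i, (coeff i p) · f⁽ⁱ⁾`. -/
noncomputable def polyDerivAct (p : Polynomial ℝ) (f : ℝ → ℝ) : ℝ → ℝ :=
  fun t => ∑ i ∈ Finset.range (p.natDegree + 1), p.coeff i * iteratedDeriv i f t

lemma contDiff_top_deriv {f : ℝ → ℝ} (hf : ContDiff ℝ (⊤ : ℕ∞) f) : ContDiff ℝ (⊤ : ℕ∞) (deriv f) := by
  have h : ContDiff ℝ (((⊤ : ℕ∞) : WithTop ℕ∞) + 1) f := by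
    rw [← WithTop.coe_one, ← WithTop.coe_add, top_add]; exact hf
  exact (contDiff_succ_iff_deriv.mp h).2.2

lemma contDiff_top_iteratedDeriv {f : ℝ → ℝ} (hf : ContDiff ℝ (⊤ : ℕ∞) f) (n : ℕ) :
    ContDiff ℝ (⊤ : ℕ∞) (iteratedDeriv n f) := by
  induction n with
  | zero => simpa using hf
  | succ n ih => rw [iteratedDeriv_succ]; exact contDiff_top_deriv ih

lemma iteratedDeriv_finsum {ι : Type*} (s : Finset ι) (f : ι → ℝ → ℝ)
    (hf : ∀ i ∈ s, ContDiff ℝ (⊤ : ℕ∞) (f i)) (n : ℕ) :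
    iteratedDeriv n (fun t => ∑ i ∈ s, f i t) = fun t => ∑ i ∈ s, iteratedDeriv n (f i) t := by
  induction n with
  | zero => simp
  | succ n ih =>
    rw [iteratedDeriv_succ, ih]
    funext t
    rw [deriv_fun_sum fun i hi =>
      ((contDiff_top_iteratedDeriv (hf i hi) n).differentiable (by simp)).differentiableAt]
    simp only [iteratedDeriv_succ]

lemma iteratedDeriv_const_mul' {f : ℝ → ℝ} (hf : ContDiff ℝ (⊤ : ℕ∞) f) (c : ℝ) (n : ℕ) :
    iteratedDeriv n (fun t => c * f t) = fun t => c * iteratedDeriv n f t := by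
  induction n with
  | zero => simp
  | succ n ih =>
    rw [iteratedDeriv_succ, ih]
    funext t
    rw [iteratedDeriv_succ, deriv_const_mul c
      ((contDiff_top_iteratedDeriv hf n).differentiable (by simp)).differentiableAt]

lemma iteratedDeriv_zero_fun (i : ℕ) :
    iteratedDeriv i (fun _ : ℝ => (0:ℝ)) = fun _ => 0 := by
  induction i with
  | zero => simp
  | succ i ih =>
    rw [iteratedDeriv_succ, ih]
    funext t
    simp

lemma iteratedDeriv_iteratedDeriv' (k i : ℕ) (f : ℝ → ℝ) :
    iteratedDeriv k (iteratedDeriv i f) = iteratedDeriv (k + i) f := by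
  simp only [iteratedDeriv_eq_iterate]
  funext t
  exact (Function.iterate_add_apply deriv k i f ▸ rfl)

lemma polyDerivAct_eq (p : Polynomial ℝ) (f : ℝ → ℝ) (N : ℕ) (hN : p.natDegree < N) :
    polyDerivAct p f = fun t => ∑ i ∈ Finset.range N, p.coeff i * iteratedDeriv i f t := by
  funext t
  unfold polyDerivAct
  apply Finset.sum_subset
  · exact Finset.range_subset_range.2 hN
  · intro i _ hi
    rw [Finset.mem_range, not_lt] at hi
    rw [Polynomial.coeff_eq_zero_of_natDegree_lt (by omega), zero_mul]

lemma polyDerivAct_smooth (p : Polynomial ℝ) {f : ℝ → ℝ} (hf : ContDiff ℝ (⊤ : ℕ∞) f) :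
    ContDiff ℝ (⊤ : ℕ∞) (polyDerivAct p f) := by
  unfold polyDerivAct
  exact ContDiff.sum fun i _ => (contDiff_top_iteratedDeriv hf i).const_smul (p.coeff i)

lemma polyDerivAct_zero_fun (p : Polynomial ℝ) : polyDerivAct p (fun _ => (0:ℝ)) = fun _ => 0 := by
  funext t
  unfold polyDerivAct
  refine Finset.sum_eq_zero fun i _ => ?_
  rw [iteratedDeriv_zero_fun]; ring

lemma polyDerivAct_add (p r : Polynomial ℝ) (f : ℝ → ℝ) :
    polyDerivAct (p + r) f = fun t => polyDerivAct p f t + polyDerivAct r f t := by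
  set N := max (p + r).natDegree (max p.natDegree r.natDegree) + 1 with hNdef
  rw [polyDerivAct_eq (p + r) f N (by omega), polyDerivAct_eq p f N (by omega),
    polyDerivAct_eq r f N (by omega)]
  funext t
  rw [← Finset.sum_add_distrib]
  refine Finset.sum_congr rfl fun i _ => ?_
  rw [Polynomial.coeff_add]; ring

lemma iteratedDeriv_polyDerivAct (k : ℕ) (p : Polynomial ℝ) {f : ℝ → ℝ}
    (hf : ContDiff ℝ (⊤ : ℕ∞) f) :
    iteratedDeriv k (polyDerivAct p f) =
      fun t => ∑ i ∈ Finset.range (p.natDegree + 1), p.coeff i * iteratedDeriv (k + i) f t := by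
  unfold polyDerivAct
  rw [iteratedDeriv_finsum (Finset.range (p.natDegree + 1))
    (fun i t => p.coeff i * iteratedDeriv i f t)
    (fun i _ => ((contDiff_top_iteratedDeriv hf i).const_smul (p.coeff i))) k]
  funext t
  refine Finset.sum_congr rfl fun i _ => ?_
  rw [iteratedDeriv_const_mul' (contDiff_top_iteratedDeriv hf i) (p.coeff i) k,
    iteratedDeriv_iteratedDeriv']

lemma polyDerivAct_monomial_mul (c : ℝ) (k : ℕ) (r : Polynomial ℝ) {f : ℝ → ℝ}
    (hf : ContDiff ℝ (⊤ : ℕ∞) f) :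
    polyDerivAct (Polynomial.C c * Polynomial.X ^ k * r) f =
      polyDerivAct (Polynomial.C c * Polynomial.X ^ k) (polyDerivAct r f) := by
  rcases eq_or_ne c 0 with hc | hc
  · simp only [hc, map_zero, zero_mul]
    funext t
    simp [polyDerivAct]
  have hdeg : (Polynomial.C c * Polynomial.X ^ k).natDegree = k := by
    simpa using Polynomial.natDegree_C_mul_X_pow k c hc
  have hcoeff : ∀ i, (Polynomial.C c * Polynomial.X ^ k).coeff i = if i = k then c else 0 := by
    intro i
    rw [Polynomial.coeff_C_mul, Polynomial.coeff_X_pow]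
    by_cases h : i = k <;> simp [h]
  -- RHS
  have hRHS : polyDerivAct (Polynomial.C c * Polynomial.X ^ k) (polyDerivAct r f) =
      fun t => c * iteratedDeriv k (polyDerivAct r f) t := by
    funext t
    unfold polyDerivAct
    rw [hdeg]
    rw [Finset.sum_eq_single k]
    · rw [hcoeff]; simp
    · intro i _ hi; rw [hcoeff]; simp [hi]
    · intro hk; exact absurd (Finset.self_mem_range_succ k) hk
  rw [hRHS, iteratedDeriv_polyDerivAct k r hf]
  -- LHS
  rw [polyDerivAct_eq (Polynomial.C c * Polynomial.X ^ k * r) f (k + r.natDegree + 1)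
    (Nat.lt_succ_of_le (le_trans (Polynomial.natDegree_mul_le) (by rw [hdeg]))) ]
  funext t
  rw [Finset.mul_sum]
  -- LHS sum: ∑_{i < k + deg r + 1} coeff i (C c X^k r) * f^(i)
  -- coeff i (C c X^k * r) = c * coeff (i - k) r for i ≥ k, else 0
  have hco : ∀ i, (Polynomial.C c * Polynomial.X ^ k * r).coeff i =
      if k ≤ i then c * r.coeff (i - k) else 0 := by
    intro i
    rw [mul_assoc, Polynomial.coeff_C_mul, Polynomial.coeff_X_pow_mul']
    by_cases h : k ≤ i <;> simp [h]
  calc ∑ i ∈ Finset.range (k + r.natDegree + 1),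
        (Polynomial.C c * Polynomial.X ^ k * r).coeff i * iteratedDeriv i f t
      = ∑ i ∈ Finset.range (k + (r.natDegree + 1)),
        (Polynomial.C c * Polynomial.X ^ k * r).coeff i * iteratedDeriv i f t := by
        rw [show k + r.natDegree + 1 = k + (r.natDegree + 1) by omega]
    _ = ∑ i ∈ Finset.range (r.natDegree + 1),
        (Polynomial.C c * Polynomial.X ^ k * r).coeff (k + i) * iteratedDeriv (k + i) f t := by
        rw [Finset.sum_range_add]
        have : ∑ i ∈ Finset.range k,
            (Polynomial.C c * Polynomial.X ^ k * r).coeff i * iteratedDeriv i f t = 0 := by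
          refine Finset.sum_eq_zero fun i hi => ?_
          rw [Finset.mem_range] at hi
          rw [hco, if_neg (by omega), zero_mul]
        rw [this, zero_add]
    _ = ∑ i ∈ Finset.range (r.natDegree + 1), c * (r.coeff i * iteratedDeriv (k + i) f t) := by
        refine Finset.sum_congr rfl fun i _ => ?_
        rw [hco, if_pos (by omega)]
        rw [show k + i - k = i by omega]
        ring

lemma polyDerivAct_mul (p r : Polynomial ℝ) {f : ℝ → ℝ} (hf : ContDiff ℝ (⊤ : ℕ∞) f) :
    polyDerivAct (p * r) f = polyDerivAct p (polyDerivAct r f) := by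
  induction p using Polynomial.induction_on' with
  | add a b ha hb =>
    have : (a + b) * r = a * r + b * r := by ring
    rw [this, polyDerivAct_add, ha, hb, polyDerivAct_add]
  | monomial k c =>
    rw [← Polynomial.C_mul_X_pow_eq_monomial]
    exact polyDerivAct_monomial_mul c k r hf


lemma polyDerivAct_zero_poly (f : ℝ → ℝ) : polyDerivAct (0 : Polynomial ℝ) f = fun _ => 0 := by
  funext t; simp [polyDerivAct]

lemma polyDerivAct_polySum {ι : Type*} (s : Finset ι) (P : ι → Polynomial ℝ) (f : ℝ → ℝ) :
    polyDerivAct (∑ k ∈ s, P k) f = fun t => ∑ k ∈ s, polyDerivAct (P k) f t := by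
  induction s using Finset.cons_induction with
  | empty => simpa using polyDerivAct_zero_poly f
  | cons a s ha ih =>
    rw [Finset.sum_cons, polyDerivAct_add, ih]
    funext t
    rw [Finset.sum_cons]

lemma polyDerivAct_fun_sum {ι : Type*} (p : Polynomial ℝ) (s : Finset ι) (g : ι → ℝ → ℝ)
    (hg : ∀ j ∈ s, ContDiff ℝ (⊤ : ℕ∞) (g j)) :
    polyDerivAct p (fun t => ∑ j ∈ s, g j t) = fun t => ∑ j ∈ s, polyDerivAct p (g j) t := by
  funext t
  unfold polyDerivAct
  simp only [iteratedDeriv_finsum s g hg]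
  rw [Finset.sum_comm]
  refine Finset.sum_congr rfl fun j _ => ?_
  rw [Finset.mul_sum]

/-- Matrix action distributes: acting by `A * B` equals acting by `B` then `A`. -/
lemma polyDerivAct_matrix_mul {m n q : ℕ} (A : Matrix (Fin m) (Fin n) (Polynomial ℝ))
    (B : Matrix (Fin n) (Fin q) (Polynomial ℝ)) (g : Fin q → (ℝ → ℝ))
    (hg : ∀ j, ContDiff ℝ (⊤ : ℕ∞) (g j)) (i : Fin m) :
    (∑ j, polyDerivAct ((A * B) i j) (g j)) =
      ∑ k, polyDerivAct (A i k) (∑ j, polyDerivAct (B k j) (g j)) := by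
  funext t
  simp only [Finset.sum_apply]
  have hsm : ∀ k j, ContDiff ℝ (⊤ : ℕ∞) (polyDerivAct (B k j) (g j)) :=
    fun k j => polyDerivAct_smooth _ (hg j)
  calc ∑ j, polyDerivAct ((A * B) i j) (g j) t
      = ∑ j, ∑ k, polyDerivAct (A i k * B k j) (g j) t := by
        refine Finset.sum_congr rfl fun j _ => ?_
        rw [Matrix.mul_apply, polyDerivAct_polySum]
    _ = ∑ k, ∑ j, polyDerivAct (A i k) (polyDerivAct (B k j) (g j)) t := by
        rw [Finset.sum_comm]
        exact Finset.sum_congr rfl fun k _ => Finset.sum_congr rfl fun j _ => by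
          rw [polyDerivAct_mul _ _ (hg j)]
    _ = ∑ k, polyDerivAct (A i k) (∑ j, polyDerivAct (B k j) (g j)) t := by
        refine Finset.sum_congr rfl fun k _ => ?_
        have : (∑ j, polyDerivAct (B k j) (g j)) =
            fun t => ∑ j, polyDerivAct (B k j) (g j) t := by
          funext t; rw [Finset.sum_apply]
        rw [this, polyDerivAct_fun_sum _ _ _ fun j _ => hsm k j]

/-- If `D = W·H·V` over `ℝ[X]` with `W` invertible, and `h` is a vector of
smooth functions solving the decoupled system `D·h = 0`, then `z := V·h`
consists of smooth functions and solves the original system `H·z = 0`. -/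
theorem smith_normal_form_transfer_solutions
    {n q : ℕ}
    (H : Matrix (Fin n) (Fin q) (Polynomial ℝ))
    (W : Matrix (Fin n) (Fin n) (Polynomial ℝ))
    (V : Matrix (Fin q) (Fin q) (Polynomial ℝ))
    (hW : IsUnit W)
    (D : Matrix (Fin n) (Fin q) (Polynomial ℝ)) (hD : D = W * H * V)
    (h : Fin q → (ℝ → ℝ))
    (hsmooth : ∀ j, ContDiff ℝ (⊤ : ℕ∞) (h j))
    (hsol : ∀ i t, (∑ j, polyDerivAct (D i j) (h j)) t = 0)
    (z : Fin q → (ℝ → ℝ))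
    (hz : ∀ i, z i = ∑ j, polyDerivAct (V i j) (h j)) :
    (∀ i, ContDiff ℝ (⊤ : ℕ∞) (z i)) ∧ (∀ i t, (∑ j, polyDerivAct (H i j) (z j)) t = 0) := by
  obtain ⟨u, hu⟩ := hW
  set U : Matrix (Fin n) (Fin n) (Polynomial ℝ) := ↑u⁻¹ with hU
  have hUW : U * W = 1 := by rw [hU, ← hu]; exact u.inv_mul
  have hHV : H * V = U * D := by
    rw [hD, Matrix.mul_assoc W H V, ← Matrix.mul_assoc U W (H * V), hUW, Matrix.one_mul]
  have hzsmooth : ∀ i, ContDiff ℝ (⊤ : ℕ∞) (z i) := by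
    intro i
    rw [hz i]
    have : (∑ j, polyDerivAct (V i j) (h j)) =
        fun t => ∑ j, polyDerivAct (V i j) (h j) t := by funext t; rw [Finset.sum_apply]
    rw [this]
    exact ContDiff.sum fun j _ => polyDerivAct_smooth _ (hsmooth j)
  refine ⟨hzsmooth, fun i t => ?_⟩
  have step1 : (∑ j, polyDerivAct (H i j) (z j)) t
      = (∑ j, polyDerivAct ((H * V) i j) (h j)) t := by
    have := polyDerivAct_matrix_mul H V h hsmooth i
    rw [this]
    simp only [Finset.sum_apply]
    refine Finset.sum_congr rfl fun k _ => ?_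
    rw [hz k]
  have step2 : (∑ j, polyDerivAct ((U * D) i j) (h j)) t = 0 := by
    rw [polyDerivAct_matrix_mul U D h hsmooth i]
    simp only [Finset.sum_apply]
    refine Finset.sum_eq_zero fun k _ => ?_
    have hinner : (∑ j, polyDerivAct (D k j) (h j)) = fun _ => (0:ℝ) := by
      funext s; exact hsol k s
    rw [hinner, polyDerivAct_zero_fun]
  rw [step1, hHV, step2]
end

section
/- For p ∈ ℝ[X] and a smooth function f : ℝ → ℝ, define the action p • f := (t ↦ ∑_{i=0}^{deg p} (coeff_i p) · (d^i f/dt^i)(t)), extended to matrices over ℝ[X] acting on vectors of smooth functions componentwise. Let H be an n×q matrix over ℝ[X] with n < q, let W (n×n) and V (q×q) be invertible matrices over ℝ[X], and suppose W·H·V = D, where D is the n×q block matrix [I_n | 0]. Then for a vector z : Fin q → (ℝ → ℝ) of smooth functions, H·z = 0 identically if and only if there exists a vector h : Fin q → (ℝ → ℝ) of smooth functions with h_i = 0 for all i < n such that z = V·h. In other words, the smooth solution set of H·z = 0 is exactly the set of images under V of vectors supported in the last q − n coordinates. -/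
open Polynomial

def SmoothR : Submodule ℝ (ℝ → ℝ) where
  carrier := {f | ContDiff ℝ (⊤ : ℕ∞) f}
  add_mem' := fun hf hg => by
    simp only [Set.mem_setOf_eq] at *
    exact hf.add hg
  zero_mem' := by change ContDiff ℝ (⊤ : ℕ∞) (0 : ℝ → ℝ); exact contDiff_const
  smul_mem' := fun c f hf => by
    simp only [Set.mem_setOf_eq] at *
    exact hf.const_smul c

lemma smoothR_contDiff (f : SmoothR) : ContDiff ℝ (⊤ : ℕ∞) (f : ℝ → ℝ) := f.2

noncomputable def derivEnd : Module.End ℝ SmoothR where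
  toFun f := ⟨deriv f.1, contDiff_top_deriv (smoothR_contDiff f)⟩
  map_add' f g := Subtype.ext (funext fun t => by
    have hf := ((smoothR_contDiff f).differentiable (by simp)).differentiableAt (x := t)
    have hg := ((smoothR_contDiff g).differentiable (by simp)).differentiableAt (x := t)
    have : ((f : ℝ → ℝ) + (g : ℝ → ℝ)) = fun y => (f : ℝ → ℝ) y + (g : ℝ → ℝ) y := rfl
    show deriv ((f : ℝ → ℝ) + (g : ℝ → ℝ)) t = _
    rw [this]; exact deriv_add hf hg)
  map_smul' c f := Subtype.ext (funext fun t => by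
    have hf := ((smoothR_contDiff f).differentiable (by simp)).differentiableAt (x := t)
    have : (c • (f : ℝ → ℝ) : ℝ → ℝ) = fun y => c • (f : ℝ → ℝ) y := rfl
    show deriv (c • (f : ℝ → ℝ)) t = _
    rw [this]; exact deriv_const_smul c hf)

lemma derivEnd_apply_coe (f : SmoothR) : ((derivEnd f : SmoothR) : ℝ → ℝ) = deriv (f : ℝ → ℝ) :=
  rfl

lemma derivEnd_pow (i : ℕ) (f : SmoothR) :
    ((derivEnd ^ i) f : ℝ → ℝ) = iteratedDeriv i (f : ℝ → ℝ) := by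
  induction i generalizing f with
  | zero => simp
  | succ m ih =>
    rw [pow_succ, Module.End.mul_apply, ih, iteratedDeriv_succ', derivEnd_apply_coe]

lemma polyDerivAct_eq_s7 (p : Polynomial ℝ) (f : SmoothR) :
    polyDerivAct p (f : ℝ → ℝ) = ((aeval derivEnd p) f : ℝ → ℝ) := by
  funext t
  rw [Polynomial.aeval_eq_sum_range]
  simp only [LinearMap.sum_apply, LinearMap.smul_apply, AddSubmonoidClass.coe_finset_sum,
    Finset.sum_apply, SetLike.val_smul, Pi.smul_apply]
  simp [polyDerivAct, derivEnd_pow, smul_eq_mul]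

noncomputable def mAct {a b : ℕ} (M : Matrix (Fin a) (Fin b) (Polynomial ℝ))
    (v : Fin b → SmoothR) : Fin a → SmoothR :=
  fun i => ∑ j, aeval derivEnd (M i j) (v j)

lemma mAct_mul {a b c : ℕ} (M : Matrix (Fin a) (Fin b) (Polynomial ℝ))
    (N : Matrix (Fin b) (Fin c) (Polynomial ℝ)) (v : Fin c → SmoothR) :
    mAct (M * N) v = mAct M (mAct N v) := by
  funext i
  simp only [mAct, Matrix.mul_apply, map_sum, LinearMap.sum_apply, map_mul, Module.End.mul_apply]
  rw [Finset.sum_comm]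

lemma mAct_one {a : ℕ} (v : Fin a → SmoothR) : mAct 1 v = v := by
  funext i
  have key : ∀ j, aeval derivEnd ((1 : Matrix (Fin a) (Fin a) (Polynomial ℝ)) i j) (v j)
      = if j = i then v j else 0 := by
    intro j
    rw [Matrix.one_apply]
    by_cases h : i = j
    · simp [h]
    · rw [if_neg h, map_zero, LinearMap.zero_apply, if_neg (fun hh : j = i => h hh.symm)]
  rw [mAct, Finset.sum_congr rfl (fun j _ => key j)]
  simp

lemma mAct_zero_vec {a b : ℕ} (M : Matrix (Fin a) (Fin b) (Polynomial ℝ)) :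
    mAct M 0 = 0 := by
  funext i
  simp [mAct]

lemma mAct_coe_apply {a b : ℕ} (M : Matrix (Fin a) (Fin b) (Polynomial ℝ))
    (v : Fin b → SmoothR) (i : Fin a) (t : ℝ) :
    (mAct M v i : ℝ → ℝ) t = (∑ j, polyDerivAct (M i j) (v j : ℝ → ℝ)) t := by
  simp only [mAct, AddSubmonoidClass.coe_finset_sum, Finset.sum_apply]
  refine Finset.sum_congr rfl fun j _ => ?_
  rw [polyDerivAct_eq_s7]

/-- If the Smith normal form of `H` is the block matrix `D = [I_n | 0]`
(`W·H·V = D` with `W, V` invertible over `ℝ[X]`, `n < q`), then the smooth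
solutions of `H·z = 0` are exactly the vectors `z = V·h` where `h` is a
smooth vector vanishing on the first `n` coordinates. -/
theorem smith_normal_form_solution_characterization
    {n q : ℕ} (hnq : n < q)
    (H : Matrix (Fin n) (Fin q) (Polynomial ℝ))
    (W : Matrix (Fin n) (Fin n) (Polynomial ℝ))
    (V : Matrix (Fin q) (Fin q) (Polynomial ℝ))
    (hW : IsUnit W) (hV : IsUnit V)
    (D : Matrix (Fin n) (Fin q) (Polynomial ℝ))
    (hDblock : ∀ (i : Fin n) (j : Fin q), D i j = if (j : ℕ) = (i : ℕ) then 1 else 0)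
    (hD : W * H * V = D)
    (z : Fin q → (ℝ → ℝ))
    (hzsmooth : ∀ j, ContDiff ℝ (⊤ : ℕ∞) (z j)) :
    (∀ i t, (∑ j, polyDerivAct (H i j) (z j)) t = 0) ↔
      ∃ h : Fin q → (ℝ → ℝ),
        (∀ j, ContDiff ℝ (⊤ : ℕ∞) (h j)) ∧
        (∀ j : Fin q, (j : ℕ) < n → h j = 0) ∧
        (∀ i, z i = ∑ j, polyDerivAct (V i j) (h j)) := by
  set zS : Fin q → SmoothR := fun j => ⟨z j, hzsmooth j⟩ with hzS
  obtain ⟨uV, huV⟩ := hV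
  obtain ⟨uW, huW⟩ := hW
  have hVVinv : V * (↑uV⁻¹ : Matrix (Fin q) (Fin q) (Polynomial ℝ)) = 1 := by
    rw [← huV]; exact_mod_cast uV.mul_inv
  have hVinvV : (↑uV⁻¹ : Matrix (Fin q) (Fin q) (Polynomial ℝ)) * V = 1 := by
    rw [← huV]; exact_mod_cast uV.inv_mul
  have hWinvW : (↑uW⁻¹ : Matrix (Fin n) (Fin n) (Polynomial ℝ)) * W = 1 := by
    rw [← huW]; exact_mod_cast uW.inv_mul
  constructor
  · intro hz
    have hHz : mAct H zS = 0 := by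
      funext i
      refine Subtype.ext (funext fun t => ?_)
      rw [mAct_coe_apply]
      exact hz i t
    set hS : Fin q → SmoothR := mAct (↑uV⁻¹) zS with hhS
    have hVh : mAct V hS = zS := by
      rw [hhS, ← mAct_mul, hVVinv, mAct_one]
    have hDh : mAct D hS = 0 := by
      rw [← hD, mAct_mul, mAct_mul, hVh, hHz, mAct_zero_vec]
    have hvanish : ∀ j : Fin q, (j : ℕ) < n → hS j = 0 := by
      intro j hj
      have hDh' := congrFun hDh ⟨(j : ℕ), hj⟩
      rw [mAct] at hDh'
      have key : ∀ j' : Fin q, aeval derivEnd (D ⟨(j : ℕ), hj⟩ j') (hS j')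
          = if j' = j then hS j' else 0 := by
        intro j'
        rw [hDblock]
        by_cases h : (j' : ℕ) = (j : ℕ)
        · simp [Fin.ext h, h]
        · rw [if_neg h, map_zero, LinearMap.zero_apply,
            if_neg (fun hh : j' = j => h (congrArg Fin.val hh))]
      rw [Finset.sum_congr rfl (fun j' _ => key j')] at hDh'
      simpa using hDh'
    refine ⟨fun j => (hS j : ℝ → ℝ), fun j => (hS j).2, ?_, ?_⟩
    · intro j hj
      show ((hS j : ℝ → ℝ)) = 0
      rw [hvanish j hj]; rfl
    · intro i
      have := congrFun hVh i
      have h2 : (zS i : ℝ → ℝ) = (mAct V hS i : ℝ → ℝ) := by rw [this]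
      funext t
      have h3 := congrFun h2 t
      rw [mAct_coe_apply] at h3
      exact h3
  · rintro ⟨h, hsm, hvan, hrep⟩
    set hS : Fin q → SmoothR := fun j => ⟨h j, hsm j⟩ with hhS
    have hzV : zS = mAct V hS := by
      funext i
      refine Subtype.ext (funext fun t => ?_)
      rw [mAct_coe_apply]
      exact congrFun (hrep i) t
    have hDh : mAct D hS = 0 := by
      funext i
      rw [mAct]
      apply Finset.sum_eq_zero
      intro j _
      by_cases hj : (j : ℕ) = (i : ℕ)
      · have : hS j = 0 := Subtype.ext (hvan j (hj ▸ i.2) : _)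
        rw [this, map_zero]
      · rw [hDblock, if_neg hj, map_zero, LinearMap.zero_apply]
    have hHz : mAct H zS = 0 := by
      have hHV : H * V = (↑uW⁻¹ : Matrix (Fin n) (Fin n) (Polynomial ℝ)) * D := by
        rw [← hD]
        rw [← Matrix.mul_assoc, ← Matrix.mul_assoc, hWinvW, Matrix.one_mul]
      rw [hzV, ← mAct_mul, hHV, mAct_mul, hDh, mAct_zero_vec]
    intro i t
    have := congrFun (congrArg Subtype.val (congrFun hHz i)) t
    rw [mAct_coe_apply] at this
    exact this
end
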